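/- Let (Ω, F, P) be a probability space and let β : Ω × [0,∞) → ℝ be jointly measurable with β(·,x) square integrable for each x ≥ 0, satisfying the L²-Lipschitz condition E[|β(·,x₁) − β(·,x₂)|²] ≤ L|x₁ − x₂|² for all x₁, x₂ ≥ 0, where L > 0 is a constant. Let Δx > 0 and Δt > 0 with Δt ≤ Δx, set λ = Δt/Δx, let m ≥ 1 and t = mΔt, and let T be the operator acting on the spatial variable by (Tf)(x) = (1−λ) f(x) + λ f(x+Δx). Then for every x ≥ 0, E[|(T^m β(ω,·))(x) − β(ω, x+t)|²] ≤ L t (Δx − Δt). -/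

import Mathlib

/-!
Expanding `T^m` by the binomial theorem writes `(T^m β)(x) - β(x + t)` as the average of the
increments `β(x + kΔx) - β(x + t)` under the binomial law `Bin(m, λ)`, whose weights are the
Bernstein polynomials evaluated at `λ`. By Jensen's inequality the mean square of this average is
at most the average of the mean squares, which the L²-Lipschitz condition bounds by
`L · E[(ΔxZ - t)²]` for `Z ~ Bin(m, λ)`; since `ΔxZ` has mean `t`, this is
`L · Var(ΔxZ) = L t (Δx - Δt)`.
-/

open MeasureTheory Finset

lemma bernsteinPolynomial_eval (p : ℝ) (n k : ℕ) :
    (bernsteinPolynomial ℝ n k).eval p = n.choose k * p ^ k * (1 - p) ^ (n - k) := by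
  simp [bernsteinPolynomial]

lemma bernsteinPolynomial_eval_nonneg {p : ℝ} (hp₀ : 0 ≤ p) (hp₁ : p ≤ 1) (n k : ℕ) :
    0 ≤ (bernsteinPolynomial ℝ n k).eval p := by
  have : 0 ≤ 1 - p := sub_nonneg.2 hp₁
  rw [bernsteinPolynomial_eval]
  positivity

lemma sum_bernsteinPolynomial_eval (p : ℝ) (n : ℕ) :
    ∑ k ∈ range (n + 1), (bernsteinPolynomial ℝ n k).eval p = 1 := by
  simpa [Polynomial.eval_finsetSum] using
    congrArg (Polynomial.eval p) (bernsteinPolynomial.sum ℝ n)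

/-- Pascal's rule for the binomial law: one more trial either fails or shifts the count by one. -/
lemma sum_bernsteinPolynomial_succ_eval_mul (p : ℝ) (n : ℕ) (g : ℕ → ℝ) :
    ∑ k ∈ range (n + 2), (bernsteinPolynomial ℝ (n + 1) k).eval p * g k =
      ∑ k ∈ range (n + 1),
        (bernsteinPolynomial ℝ n k).eval p * ((1 - p) * g k + p * g (k + 1)) := by
  simp only [bernsteinPolynomial_eval, mul_assoc]
  rw [sum_choose_succ_mul (fun i j => p ^ i * ((1 - p) ^ j * g i)), ← sum_add_distrib]
  refine sum_congr rfl fun k hk => ?_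
  rw [Nat.succ_sub (Nat.lt_succ_iff.1 (mem_range.1 hk)), pow_succ]
  ring

lemma sum_bernsteinPolynomial_eval_mul_sq_sub (p h : ℝ) (n : ℕ) :
    ∑ k ∈ range (n + 1), (bernsteinPolynomial ℝ n k).eval p * (k * h - n * p * h) ^ 2 =
      n * p * (1 - p) * h ^ 2 := by
  have hvar := congrArg (Polynomial.eval p) (bernsteinPolynomial.variance ℝ n)
  simp only [Polynomial.eval_finsetSum, Polynomial.eval_mul, Polynomial.eval_pow,
    Polynomial.eval_sub, Polynomial.eval_X, Polynomial.eval_natCast,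
    Polynomial.eval_one, nsmul_eq_mul] at hvar
  rw [← hvar, sum_mul]
  refine sum_congr rfl fun k _ => ?_
  ring

lemma iterate_apply_eq_sum_bernsteinPolynomial {lam Δx : ℝ} (hΔx : 0 ≤ Δx)
    {T : (ℝ → ℝ) → (ℝ → ℝ)}
    (hT : ∀ (f : ℝ → ℝ) (x : ℝ), 0 ≤ x → T f x = (1 - lam) * f x + lam * f (x + Δx))
    (n : ℕ) (f : ℝ → ℝ) {x : ℝ} (hx : 0 ≤ x) :
    T^[n] f x = ∑ k ∈ range (n + 1), (bernsteinPolynomial ℝ n k).eval lam * f (x + k * Δx) := by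
  induction n generalizing f with
  | zero => simp [bernsteinPolynomial_eval]
  | succ n ih =>
    rw [Function.iterate_succ_apply, ih, sum_bernsteinPolynomial_succ_eval_mul]
    refine sum_congr rfl fun k _ => ?_
    rw [hT _ _ (by positivity)]
    push_cast
    ring_nf

lemma sq_sum_le_sum_mul_sq {ι : Type*} {s : Finset ι} {w : ι → ℝ} (hw₀ : ∀ i ∈ s, 0 ≤ w i)
    (hw₁ : ∑ i ∈ s, w i = 1) (a : ι → ℝ) :
    (∑ i ∈ s, w i * a i) ^ 2 ≤ ∑ i ∈ s, w i * a i ^ 2 := by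
  simpa only [smul_eq_mul] using
    (even_two.convexOn_pow (𝕜 := ℝ)).map_sum_le hw₀ hw₁ fun i _ => Set.mem_univ (a i)

lemma integral_sq_sum_le_sum_mul_integral_sq {Ω ι : Type*} [MeasurableSpace Ω] {μ : Measure Ω}
    {s : Finset ι} {w : ι → ℝ} (hw₀ : ∀ i ∈ s, 0 ≤ w i) (hw₁ : ∑ i ∈ s, w i = 1)
    {a : ι → Ω → ℝ} (ha : ∀ i ∈ s, Integrable (fun ω => a i ω ^ 2) μ) :
    ∫ ω, (∑ i ∈ s, w i * a i ω) ^ 2 ∂μ ≤ ∑ i ∈ s, w i * ∫ ω, a i ω ^ 2 ∂μ := by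
  have hint : ∀ i ∈ s, Integrable (fun ω => w i * a i ω ^ 2) μ :=
    fun i hi => (ha i hi).const_mul (w i)
  calc ∫ ω, (∑ i ∈ s, w i * a i ω) ^ 2 ∂μ
      ≤ ∫ ω, ∑ i ∈ s, w i * a i ω ^ 2 ∂μ :=
        integral_mono_of_nonneg (ae_of_all _ fun _ => sq_nonneg _) (integrable_finsetSum _ hint)
          (ae_of_all _ fun ω => sq_sum_le_sum_mul_sq hw₀ hw₁ fun i => a i ω)
    _ = ∑ i ∈ s, w i * ∫ ω, a i ω ^ 2 ∂μ := by
        rw [integral_finsetSum _ hint]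
        simp only [integral_const_mul]

theorem expected_square_error_iterated_operator_vs_shift_general
    {Ω : Type*} [MeasurableSpace Ω] (μ : Measure Ω) [IsProbabilityMeasure μ]
    (β : Ω → ℝ → ℝ) (L : ℝ)
    (hmeas : Measurable fun q : Ω × ℝ => β q.1 q.2)
    (hsq : ∀ x : ℝ, 0 ≤ x → Integrable (fun ω => (β ω x) ^ 2) μ)
    (hlip : ∀ x₁ x₂ : ℝ, 0 ≤ x₁ → 0 ≤ x₂ →
      ∫ ω, |β ω x₁ - β ω x₂| ^ 2 ∂μ ≤ L * |x₁ - x₂| ^ 2)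
    (Δx Δt lam t : ℝ) (hΔx : 0 < Δx) (hΔt : 0 < Δt) (hle : Δt ≤ Δx)
    (hlam : lam = Δt / Δx) (m : ℕ) (ht : t = m * Δt)
    (T : (ℝ → ℝ) → (ℝ → ℝ))
    (hT : ∀ (f : ℝ → ℝ) (x : ℝ), 0 ≤ x → T f x = (1 - lam) * f x + lam * f (x + Δx))
    (x : ℝ) (hx : 0 ≤ x) :
    ∫ ω, |(T^[m] (β ω)) x - β ω (x + t)| ^ 2 ∂μ ≤ L * t * (Δx - Δt) := by
  have hΔt_eq : Δt = lam * Δx := by rw [hlam]; field_simp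
  have hlam₀ : 0 ≤ lam := by rw [hlam]; positivity
  have hlam₁ : lam ≤ 1 := by rw [hlam]; exact div_le_one_of_le₀ hle hΔx.le
  have hxt : 0 ≤ x + t := by rw [ht]; positivity
  set w : ℕ → ℝ := fun k => (bernsteinPolynomial ℝ m k).eval lam
  have hw₀ : ∀ k ∈ range (m + 1), 0 ≤ w k :=
    fun k _ => bernsteinPolynomial_eval_nonneg hlam₀ hlam₁ m k
  have hmemLp : ∀ y, 0 ≤ y → MemLp (fun ω => β ω y) 2 μ := fun y hy =>
    (memLp_two_iff_integrable_sq (hmeas.comp measurable_prodMk_right).aestronglyMeasurable).2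
      (hsq y hy)
  have herror : ∀ ω, T^[m] (β ω) x - β ω (x + t) =
      ∑ k ∈ range (m + 1), w k * (β ω (x + k * Δx) - β ω (x + t)) := fun ω => by
    simp only [mul_sub, sum_sub_distrib, ← sum_mul, w, sum_bernsteinPolynomial_eval, one_mul,
      iterate_apply_eq_sum_bernsteinPolynomial hΔx.le hT m (β ω) hx]
  calc ∫ ω, |T^[m] (β ω) x - β ω (x + t)| ^ 2 ∂μ
      ≤ ∑ k ∈ range (m + 1), w k * ∫ ω, (β ω (x + k * Δx) - β ω (x + t)) ^ 2 ∂μ := by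
        simp only [sq_abs, herror]
        exact integral_sq_sum_le_sum_mul_integral_sq hw₀ (sum_bernsteinPolynomial_eval lam m)
          fun k _ => ((hmemLp _ (by positivity)).sub (hmemLp _ hxt)).integrable_sq
    _ ≤ ∑ k ∈ range (m + 1), w k * (L * (k * Δx - m * lam * Δx) ^ 2) := by
        gcongr with k hk
        · exact hw₀ k hk
        · simpa only [sq_abs, ht, hΔt_eq, add_sub_add_left_eq_sub, mul_assoc] using
            hlip (x + k * Δx) (x + t) (by positivity) hxt
    _ = L * t * (Δx - Δt) := by
        simp only [mul_left_comm (w _) L, ← mul_sum, w, sum_bernsteinPolynomial_eval_mul_sq_sub]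
        rw [ht, hΔt_eq]
        ring

/-- If `β : Ω × [0,∞) → ℝ` is jointly measurable, square integrable in `ω` for each `x ≥ 0`,
and satisfies the L²-Lipschitz condition `E[|β(x₁) − β(x₂)|²] ≤ L|x₁ − x₂|²`, then for the
finite-difference operator `(Tf)(x) = (1−λ) f(x) + λ f(x+Δx)` with `λ = Δt/Δx`, `Δt ≤ Δx`,
and `t = mΔt`, one has `E[|(T^m β)(x) − β(x+t)|²] ≤ L t (Δx − Δt)`. -/
theorem expected_square_error_iterated_operator_vs_shift
    {Ω : Type*} [MeasurableSpace Ω] (μ : Measure Ω) [IsProbabilityMeasure μ]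
    (β : Ω → ℝ → ℝ) (L : ℝ) (hL : 0 < L)
    (hmeas : Measurable fun q : Ω × ℝ => β q.1 q.2)
    (hsq : ∀ x : ℝ, 0 ≤ x → Integrable (fun ω => (β ω x) ^ 2) μ)
    (hlip : ∀ x₁ x₂ : ℝ, 0 ≤ x₁ → 0 ≤ x₂ →
      ∫ ω, |β ω x₁ - β ω x₂| ^ 2 ∂μ ≤ L * |x₁ - x₂| ^ 2)
    (Δx Δt lam t : ℝ) (hΔx : 0 < Δx) (hΔt : 0 < Δt) (hle : Δt ≤ Δx)
    (hlam : lam = Δt / Δx) (m : ℕ) (hm : 1 ≤ m) (ht : t = m * Δt)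
    (T : (ℝ → ℝ) → (ℝ → ℝ))
    (hT : ∀ (f : ℝ → ℝ) (x : ℝ), 0 ≤ x → T f x = (1 - lam) * f x + lam * f (x + Δx))
    (x : ℝ) (hx : 0 ≤ x) :
    ∫ ω, |(T^[m] (β ω)) x - β ω (x + t)| ^ 2 ∂μ ≤ L * t * (Δx - Δt) :=
  expected_square_error_iterated_operator_vs_shift_general μ β L hmeas hsq hlip Δx Δt lam t hΔx hΔt
    hle hlam m ht T hT x hx
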